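/- Let p be a prime and let M be a separably closed field of characteristic p. Let A ⊆ M be a subfield that is definably closed in M with respect to the first-order language of rings: every element b ∈ M for which there exists a ring-language formula φ(x, ȳ) and a tuple ā from A such that b is the unique element of M satisfying φ(x, ā) already lies in A. Then the field extension M/A is separable. -/

import Mathlib

open FirstOrder Language

attribute [local instance] FirstOrder.Ring.compatibleRingOfRing

/-- `b` is definable over `A` in the `L`-structure `M`: there are an `L`-formula `ψ(x, ȳ)`
and a tuple `ā` from `A` such that `b` is the unique element of `M` satisfying `ψ(x, ā)`. -/
def IsDefinableOver (L : FirstOrder.Language) {M : Type*} [L.Structure M]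
    (A : Set M) (b : M) : Prop :=
  ∃ (n : ℕ) (ψ : L.Formula (Fin (n + 1))) (a : Fin n → M),
    (∀ i, a i ∈ A) ∧ ∀ y : M, ψ.Realize (Fin.cons y a) ↔ y = b

/-- A tuple `v` of elements of `M` is linearly independent over the subfield `S` of `M`. -/
def LinIndepOver {M : Type*} [Field M] (S : Subfield M) {n : ℕ} (v : Fin n → M) : Prop :=
  ∀ c : Fin n → M, (∀ i, c i ∈ S) → ∑ i, c i * v i = 0 → ∀ i, c i = 0

/-- The extension `M / A` is separable: `A` is linearly disjoint from `M ^ p` over `A ^ p`,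
i.e. every tuple from `A` which is linearly independent over `A ^ p` remains linearly
independent over `M ^ p`. -/
def IsSepExt (p : ℕ) {M : Type*} [Field M] [ExpChar M p] (A : Subfield M) : Prop :=
  ∀ (n : ℕ) (v : Fin n → M), (∀ i, v i ∈ A) →
    LinIndepOver (A.map (frobenius M p)) v → LinIndepOver (frobenius M p).fieldRange v

/-!
If `v₁, …, vₙ ∈ A` are linearly independent over `A ^ p` but `∑ dⱼ ^ p vⱼ = 0` for some
nonzero `d` in `M`, take such a relation of minimal support `S` and scale it so that
`d i₀ = 1`. By minimality it is the only relation with these properties, so each `dⱼ` is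
defined over `A` by a ring formula, hence lies in `A`; but then `∑ dⱼ ^ p vⱼ = 0` is a
nontrivial relation over `A ^ p`.
-/

open FirstOrder.Ring

section PowRelation

variable {R : Type*} [CommRing R] {p n : ℕ}

def IsPowRelation (p : ℕ) (v d : Fin n → R) : Prop :=
  ∑ j, d j ^ p * v j = 0

def IsMonicPowRelation (p : ℕ) (v : Fin n → R) (S : Finset (Fin n)) (i₀ : Fin n)
    (e : Fin n → R) : Prop :=
  IsPowRelation p v e ∧ e i₀ = 1 ∧ ∀ j ∉ S, e j = 0

theorem IsPowRelation.sub [ExpChar R p] {v d e : Fin n → R} (hd : IsPowRelation p v d)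
    (he : IsPowRelation p v e) : IsPowRelation p v (d - e) := by
  unfold IsPowRelation at *
  simp only [Pi.sub_apply, sub_pow_expChar, sub_mul, Finset.sum_sub_distrib, hd, he, sub_zero]

theorem IsPowRelation.mul_left {v d : Fin n → R} (hd : IsPowRelation p v d) (c : R) :
    IsPowRelation p v (fun j => c * d j) := by
  unfold IsPowRelation at *
  simp only [mul_pow, mul_assoc, ← Finset.mul_sum, hd, mul_zero]

theorem IsPowRelation.isMonicPowRelation_inv_mul {M : Type*} [Field M] {v d : Fin n → M}
    {S : Finset (Fin n)} {i₀ : Fin n} (hd : IsPowRelation p v d) (hdS : ∀ j ∉ S, d j = 0)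
    (hi₀ : d i₀ ≠ 0) : IsMonicPowRelation p v S i₀ fun j => (d i₀)⁻¹ * d j :=
  ⟨hd.mul_left _, inv_mul_cancel₀ hi₀, fun j hj => by simp [hdS j hj]⟩

theorem IsMonicPowRelation.eq_of_minimal [ExpChar R p] {v e f : Fin n → R}
    {S : Finset (Fin n)} {i₀ : Fin n} (he : IsMonicPowRelation p v S i₀ e)
    (hf : IsMonicPowRelation p v S i₀ f)
    (hmin : ∀ g, IsPowRelation p v g → (∀ j ∉ S.erase i₀, g j = 0) → g = 0) : f = e := by
  refine (sub_eq_zero.1 (hmin _ (he.1.sub hf.1) fun j hj => ?_)).symm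
  rcases eq_or_ne j i₀ with rfl | hji₀
  · simp [he.2.1, hf.2.1]
  · have hjS : j ∉ S := fun h => hj (Finset.mem_erase.2 ⟨hji₀, h⟩)
    simp [he.2.2 j hjS, hf.2.2 j hjS]

theorem exists_isMonicPowRelation_unique {M : Type*} [Field M] [ExpChar M p] {v d : Fin n → M}
    (hd : IsPowRelation p v d) (hd0 : d ≠ 0) :
    ∃ S i₀ e, IsMonicPowRelation p v S i₀ e ∧
      ∀ f, IsMonicPowRelation p v S i₀ f → f = e := by
  classical
  suffices key : ∀ S : Finset (Fin n), ∀ d, IsPowRelation p v d → d ≠ 0 →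
      (∀ j ∉ S, d j = 0) → ∃ S i₀ e, IsMonicPowRelation p v S i₀ e ∧
        ∀ f, IsMonicPowRelation p v S i₀ f → f = e from
    key Finset.univ d hd hd0 (by simp)
  intro S
  induction S using Finset.strongInduction with
  | H S ih =>
  intro d hd hd0 hdS
  by_cases hsmaller : ∃ T ⊂ S, ∃ d', IsPowRelation p v d' ∧ d' ≠ 0 ∧ ∀ j ∉ T, d' j = 0
  · obtain ⟨T, hTS, d', hd', hd'0, hd'T⟩ := hsmaller
    exact ih T hTS d' hd' hd'0 hd'T
  obtain ⟨i₀, hi₀⟩ := Function.ne_iff.1 hd0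
  have hi₀S : i₀ ∈ S := by_contra fun h => hi₀ (hdS i₀ h)
  have hmin : ∀ g, IsPowRelation p v g → (∀ j ∉ S.erase i₀, g j = 0) → g = 0 :=
    fun g hg hgS => by_contra fun hg0 => hsmaller ⟨_, Finset.erase_ssubset hi₀S, g, hg, hg0, hgS⟩
  have he := hd.isMonicPowRelation_inv_mul hdS hi₀
  exact ⟨S, i₀, _, he, fun f hf => he.eq_of_minimal hf hmin⟩

end PowRelation

section Formula

variable {α : Type*} {k : ℕ}

noncomputable def polyEq (P Q : FreeCommRing (α ⊕ Fin k)) : Language.ring.BoundedFormula α k :=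
  (termOfFreeCommRing P).bdEqual (termOfFreeCommRing Q)

@[simp]
theorem realize_polyEq {R : Type*} [CommRing R] (P Q : FreeCommRing (α ⊕ Fin k)) (v : α → R)
    (xs : Fin k → R) :
    (polyEq P Q).Realize v xs ↔
      FreeCommRing.lift (Sum.elim v xs) P = FreeCommRing.lift (Sum.elim v xs) Q := by
  simp [polyEq, BoundedFormula.realize_bdEqual, realize_termOfFreeCommRing]

noncomputable def monicPowRelationFormula (p : ℕ) {n : ℕ} (S : Finset (Fin n)) (i₀ i : Fin n) :
    Language.ring.Formula (Fin (n + 1)) :=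
  let x : FreeCommRing (Fin (n + 1) ⊕ Fin n) := .of (.inl 0)
  let v (j : Fin n) : FreeCommRing (Fin (n + 1) ⊕ Fin n) := .of (.inl j.succ)
  let e (j : Fin n) : FreeCommRing (Fin (n + 1) ⊕ Fin n) := .of (.inr j)
  BoundedFormula.exs <|
    polyEq (∑ j, e j ^ p * v j) 0 ⊓ polyEq (e i₀) 1 ⊓
      BoundedFormula.iInf (fun j : {j // j ∉ S} => polyEq (e j) 0) ⊓ polyEq x (e i)

theorem realize_monicPowRelationFormula {R : Type*} [CommRing R] {p n : ℕ} (S : Finset (Fin n))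
    (i₀ i : Fin n) (y : R) (v : Fin n → R) :
    (monicPowRelationFormula p S i₀ i).Realize (Fin.cons y v) ↔
      ∃ e, IsMonicPowRelation p v S i₀ e ∧ y = e i := by
  simp [monicPowRelationFormula, BoundedFormula.realize_exs, BoundedFormula.realize_iInf,
    IsMonicPowRelation, IsPowRelation, and_assoc]

end Formula

theorem isDefinableOver_of_isMonicPowRelation_unique {M : Type*} [CommRing M] {p n : ℕ}
    {A : Set M} {v : Fin n → M} (hv : ∀ j, v j ∈ A) {S : Finset (Fin n)} {i₀ : Fin n}
    {e : Fin n → M} (he : IsMonicPowRelation p v S i₀ e)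
    (huniq : ∀ f, IsMonicPowRelation p v S i₀ f → f = e) (i : Fin n) :
    IsDefinableOver Language.ring A (e i) := by
  refine ⟨n, monicPowRelationFormula p S i₀ i, v, hv, fun y => ?_⟩
  rw [realize_monicPowRelationFormula]
  exact ⟨fun ⟨f, hf, hy⟩ => huniq f hf ▸ hy, fun hy => ⟨e, he, hy⟩⟩

theorem sepClosed_separable_over_dclClosed_general
    (p : ℕ) [Fact p.Prime] (M : Type*) [Field M] [CharP M p]
    (A : Subfield M)
    (hdc : ∀ b : M, IsDefinableOver Language.ring (A : Set M) b → b ∈ A) :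
    IsSepExt p A := by
  intro n v hv hli c hc hrel i
  by_contra hci
  choose d hd using fun j => RingHom.mem_fieldRange.1 (hc j)
  have hdrel : IsPowRelation p v d := by
    simpa only [IsPowRelation, ← hd, frobenius_def] using hrel
  have hd0 : d ≠ 0 := fun h => hci (by rw [← hd i, h, Pi.zero_apply, map_zero])
  obtain ⟨S, i₀, e, he, huniq⟩ := exists_isMonicPowRelation_unique hdrel hd0
  have heA : ∀ j, e j ∈ A := fun j =>
    hdc _ (isDefinableOver_of_isMonicPowRelation_unique hv he huniq j)
  have hfrob_e : ∀ j, frobenius M p (e j) = 0 :=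
    hli _ (fun j => Subfield.mem_map.2 ⟨e j, heA j, rfl⟩)
      (by simpa only [frobenius_def, IsPowRelation] using he.1)
  simpa [he.2.1] using hfrob_e i₀

/-- Srour's Lemma 0: if `M` is a separably closed field of characteristic `p` and `A ⊆ M`
is a subfield that is definably closed in `M` with respect to the language of rings, then
the extension `M / A` is separable. -/
theorem sepClosed_separable_over_dclClosed
    (p : ℕ) [Fact p.Prime] (M : Type*) [Field M] [CharP M p] [IsSepClosed M]
    (A : Subfield M)
    (hdc : ∀ b : M, IsDefinableOver Language.ring (A : Set M) b → b ∈ A) :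
    IsSepExt p A :=
  sepClosed_separable_over_dclClosed_general p M A hdc
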